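/- arXiv:2402.05323 — 5 statements merged into one kernel-verified Lean document; each statement's English description precedes it below -/
import Mathlib

section
/- Let φ be an admissible function and 0 < q < ∞. Then there exist constants c, C > 0 (depending only on φ and q) such that for all r ≥ 1: c·(φ(1 + log r)·r^{1/q} − 1) ≤ ∫₁^r φ(1 + log s) s^{1/q − 1} ds ≤ C·(φ(1 + log r)·r^{1/q} − 1). -/
/-!
Write `f(s) = φ(1 + log s) s^(1/q - 1)`. Since `φ' > 0`, `φ` is increasing, so
`∫₁^r f ≤ φ(1 + log r) ∫₁^r s^(1/q - 1) ds = q φ(1 + log r) (r^(1/q) - 1)`, and `φ ≥ 1` turns the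
last factor into `φ(1 + log r) r^(1/q) - 1`. Conversely `G(s) = φ(1 + log s) s^(1/q)` satisfies
`G' = (φ'(1 + log s) + φ(1 + log s)/q) s^(1/q - 1) ≤ (β + 1/q) f(s)` because `φ' ≤ β φ` on `[1, ∞)`,
and integrating from `1` to `r` (with `G(1) = 1`) gives the lower bound.
-/

open Real MeasureTheory Set intervalIntegral

section LogDerivBounds

variable {φ : ℝ → ℝ} {γ β x : ℝ}

lemma deriv_pos_of_div_le_logDeriv (hγ : 0 < γ) (hx : 0 < x) (hφ : 0 < φ x)
    (h : γ / x ≤ deriv φ x / φ x) : 0 < deriv φ x :=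
  (div_pos_iff_of_pos_right hφ).mp ((div_pos hγ hx).trans_le h)

lemma deriv_le_mul_of_logDeriv_le_div (hβ : 0 ≤ β) (hx : 1 ≤ x) (hφ : 0 < φ x)
    (h : deriv φ x / φ x ≤ β / x) : deriv φ x ≤ β * φ x := by
  rw [← div_le_iff₀ hφ]
  exact h.trans (div_le_self hβ hx)

end LogDerivBounds

section LogWeightedIntegral

variable {φ : ℝ → ℝ} {β q r : ℝ}

lemma monotoneOn_comp_one_add_log (hmono : MonotoneOn φ (Ici 1)) :
    MonotoneOn (fun s => φ (1 + log s)) (Ici 1) := by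
  intro s hs t ht hst
  have hs0 : 0 < s := zero_lt_one.trans_le hs
  refine hmono ?_ ?_ (by gcongr)
  · simpa using log_nonneg hs
  · simpa using log_nonneg (show (1 : ℝ) ≤ t from ht)

lemma intervalIntegrable_comp_one_add_log_mul_rpow (hmono : MonotoneOn φ (Ici 1))
    (p : ℝ) (hr : 1 ≤ r) :
    IntervalIntegrable (fun s => φ (1 + log s) * s ^ p) volume 1 r := by
  have hsub : uIcc 1 r ⊆ Ici 1 := by rw [uIcc_of_le hr]; exact Icc_subset_Ici_self
  refine IntervalIntegrable.mul_continuousOn ?_ ?_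
  · exact ((monotoneOn_comp_one_add_log hmono).mono hsub).intervalIntegrable
  · exact continuousOn_id.rpow_const fun s hs =>
      Or.inl (zero_lt_one.trans_le (hsub hs)).ne'

lemma hasDerivAt_comp_one_add_log_mul_rpow {u : ℝ} (hu : 0 < u)
    (hd : DifferentiableAt ℝ φ (1 + log u)) (p : ℝ) :
    HasDerivAt (fun v => φ (1 + log v) * v ^ p)
      ((deriv φ (1 + log u) + p * φ (1 + log u)) * u ^ (p - 1)) u := by
  have h := (hd.hasDerivAt.comp u ((hasDerivAt_log hu.ne').const_add 1)).mul
    (hasDerivAt_rpow_const (p := p) (Or.inl hu.ne'))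
  refine h.congr_deriv ?_
  simp only [Function.comp_apply, rpow_sub_one hu.ne']
  field_simp

lemma integral_comp_one_add_log_mul_rpow_le (hmono : MonotoneOn φ (Ici 1))
    (hφ : ∀ x, 1 ≤ x → 1 ≤ φ x) (hq : 0 < q) (hr : 1 ≤ r) :
    ∫ s in (1 : ℝ)..r, φ (1 + log s) * s ^ (1 / q - 1) ≤
      q * (φ (1 + log r) * r ^ (1 / q) - 1) := by
  have hφr : 1 ≤ φ (1 + log r) := hφ _ (by linarith [log_nonneg hr])
  calc ∫ s in (1 : ℝ)..r, φ (1 + log s) * s ^ (1 / q - 1)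
      ≤ ∫ s in (1 : ℝ)..r, φ (1 + log r) * s ^ (1 / q - 1) := by
        refine integral_mono_on hr (intervalIntegrable_comp_one_add_log_mul_rpow hmono _ hr)
          ?_ fun s hs => ?_
        · exact (intervalIntegrable_rpow' (by linarith [one_div_pos.mpr hq])).const_mul _
        · exact mul_le_mul_of_nonneg_right
            (monotoneOn_comp_one_add_log hmono hs.1 (show (1:ℝ) ≤ r from hr) hs.2)
            (rpow_nonneg (zero_le_one.trans hs.1) _)
    _ = q * (φ (1 + log r) * r ^ (1 / q) - φ (1 + log r)) := by
        rw [intervalIntegral.integral_const_mul,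
          integral_rpow (Or.inl (by linarith [one_div_pos.mpr hq])), sub_add_cancel, one_rpow]
        field_simp
    _ ≤ q * (φ (1 + log r) * r ^ (1 / q) - 1) := by gcongr

lemma sub_le_integral_comp_one_add_log_mul_rpow (hφ1 : φ 1 = 1)
    (hmono : MonotoneOn φ (Ici 1)) (hdiff : ∀ x, 1 ≤ x → DifferentiableAt ℝ φ x)
    (hub : ∀ x, 1 ≤ x → deriv φ x ≤ β * φ x) (q : ℝ) (hr : 1 ≤ r) :
    φ (1 + log r) * r ^ (1 / q) - 1 ≤
      (β + 1 / q) * ∫ s in (1 : ℝ)..r, φ (1 + log s) * s ^ (1 / q - 1) := by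
  have hlog : ∀ u, 1 ≤ u → 1 ≤ 1 + log u := fun u hu => by linarith [log_nonneg hu]
  have hderiv : ∀ u, 1 ≤ u → HasDerivAt (fun v => φ (1 + log v) * v ^ (1 / q))
      ((deriv φ (1 + log u) + 1 / q * φ (1 + log u)) * u ^ (1 / q - 1)) u := fun u hu =>
    hasDerivAt_comp_one_add_log_mul_rpow (zero_lt_one.trans_le hu) (hdiff _ (hlog u hu)) _
  have key := sub_le_integral_of_hasDeriv_right_of_le hr
    (fun u hu => (hderiv u hu.1).continuousAt.continuousWithinAt)
    (fun u hu => (hderiv u hu.1.le).hasDerivWithinAt)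
    ((intervalIntegrable_iff_integrableOn_Icc_of_le hr).mp
      ((intervalIntegrable_comp_one_add_log_mul_rpow hmono (1 / q - 1) hr).const_mul (β + 1 / q)))
    (fun u hu => by
      have := hub _ (hlog u hu.1.le)
      have := rpow_nonneg (zero_le_one.trans hu.1.le) (1 / q - 1)
      nlinarith)
  simpa [hφ1, intervalIntegral.integral_const_mul] using key

end LogWeightedIntegral

theorem stmt4_general (φ : ℝ → ℝ) (γ β : ℝ) (hγ : 0 < γ) (hβ : 0 < β)
    (hmap : ∀ x : ℝ, 1 ≤ x → 1 ≤ φ x)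
    (hφ1 : φ 1 = 1)
    (hder : ∀ x : ℝ, 1 ≤ x → γ / x ≤ deriv φ x / φ x ∧ deriv φ x / φ x ≤ β / x)
    (q : ℝ) (hq : 0 < q) :
    ∃ c C : ℝ, 0 < c ∧ 0 < C ∧ ∀ r : ℝ, 1 ≤ r →
      c * (φ (1 + Real.log r) * r ^ (1 / q) - 1) ≤
        (∫ s in (1 : ℝ)..r, φ (1 + Real.log s) * s ^ (1 / q - 1)) ∧
      (∫ s in (1 : ℝ)..r, φ (1 + Real.log s) * s ^ (1 / q - 1)) ≤
        C * (φ (1 + Real.log r) * r ^ (1 / q) - 1) := by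
  have hpos : ∀ x, 1 ≤ x → 0 < φ x := fun x hx => zero_lt_one.trans_le (hmap x hx)
  have hderiv_pos : ∀ x, 1 ≤ x → 0 < deriv φ x := fun x hx =>
    deriv_pos_of_div_le_logDeriv hγ (zero_lt_one.trans_le hx) (hpos x hx) (hder x hx).1
  have hdiff : ∀ x, 1 ≤ x → DifferentiableAt ℝ φ x := fun x hx =>
    differentiableAt_of_deriv_ne_zero (hderiv_pos x hx).ne'
  have hmono : MonotoneOn φ (Ici 1) :=
    (strictMonoOn_of_deriv_pos (convex_Ici 1)
      (fun x hx => (hdiff x hx).continuousAt.continuousWithinAt)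
      (fun x hx => hderiv_pos x (interior_subset hx))).monotoneOn
  have hub : ∀ x, 1 ≤ x → deriv φ x ≤ β * φ x := fun x hx =>
    deriv_le_mul_of_logDeriv_le_div hβ.le hx (hpos x hx) (hder x hx).2
  have hβq : 0 < β + 1 / q := by positivity
  refine ⟨(β + 1 / q)⁻¹, q, inv_pos.mpr hβq, hq, fun r hr => ⟨?_,
    integral_comp_one_add_log_mul_rpow_le hmono hmap hq hr⟩⟩
  rw [inv_mul_le_iff₀ hβq]
  exact sub_le_integral_comp_one_add_log_mul_rpow hφ1 hmono hdiff hub q hr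

theorem stmt4 (φ : ℝ → ℝ) (γ β : ℝ) (hγ : 0 < γ) (hβ : 0 < β)
    (hmap : ∀ x : ℝ, 1 ≤ x → 1 ≤ φ x)
    (hφ1 : φ 1 = 1)
    (hconc : ConcaveOn ℝ (Set.Ici (1 : ℝ)) (fun x => Real.log (φ x)))
    (hder : ∀ x : ℝ, 1 ≤ x → γ / x ≤ deriv φ x / φ x ∧ deriv φ x / φ x ≤ β / x)
    (q : ℝ) (hq : 0 < q) :
    ∃ c C : ℝ, 0 < c ∧ 0 < C ∧ ∀ r : ℝ, 1 ≤ r →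
      c * (φ (1 + Real.log r) * r ^ (1 / q) - 1) ≤
        (∫ s in (1 : ℝ)..r, φ (1 + Real.log s) * s ^ (1 / q - 1)) ∧
      (∫ s in (1 : ℝ)..r, φ (1 + Real.log s) * s ^ (1 / q - 1)) ≤
        C * (φ (1 + Real.log r) * r ^ (1 / q) - 1) :=
  stmt4_general φ γ β hγ hβ hmap hφ1 hder q hq
end

section
/- Let φ be an admissible function. Then there exist constants c, C > 0 (depending only on φ) such that for all r ≥ 1: c·(φ(1 + log r) − 1) ≤ ∫₁^r (1 + log s)^{−1} φ(1 + log s) · (ds/s) ≤ C·(φ(1 + log r) − 1). -/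
open Real MeasureTheory

theorem stmt5 (φ : ℝ → ℝ) (γ β : ℝ) (hγ : 0 < γ) (hβ : 0 < β)
    (hmap : ∀ x : ℝ, 1 ≤ x → 1 ≤ φ x)
    (hφ1 : φ 1 = 1)
    (hconc : ConcaveOn ℝ (Set.Ici (1 : ℝ)) (fun x => Real.log (φ x)))
    (hder : ∀ x : ℝ, 1 ≤ x → γ / x ≤ deriv φ x / φ x ∧ deriv φ x / φ x ≤ β / x) :
    ∃ c C : ℝ, 0 < c ∧ 0 < C ∧ ∀ r : ℝ, 1 ≤ r →
      c * (φ (1 + Real.log r) - 1) ≤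
        (∫ s in (1 : ℝ)..r, (1 + Real.log s)⁻¹ * φ (1 + Real.log s) / s) ∧
      (∫ s in (1 : ℝ)..r, (1 + Real.log s)⁻¹ * φ (1 + Real.log s) / s) ≤
        C * (φ (1 + Real.log r) - 1) := by
  have hpos : ∀ x : ℝ, 1 ≤ x → (0:ℝ) < φ x := fun x hx => lt_of_lt_of_le one_pos (hmap x hx)
  -- differentiability
  have hdiff : ∀ x : ℝ, 1 ≤ x → HasDerivAt φ (deriv φ x) x := by
    intro x hx
    have hx0 : (0:ℝ) < x := lt_of_lt_of_le one_pos hx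
    by_cases h : DifferentiableAt ℝ φ x
    · exact h.hasDerivAt
    · exfalso
      have h2 := (hder x hx).1
      rw [deriv_zero_of_not_differentiableAt h] at h2
      simp only [zero_div] at h2
      exact absurd h2 (not_le.mpr (div_pos hγ hx0))
  have hd_lb : ∀ x : ℝ, 1 ≤ x → γ / x * φ x ≤ deriv φ x := by
    intro x hx
    exact (le_div_iff₀ (hpos x hx)).mp (hder x hx).1
  have hd_ub : ∀ x : ℝ, 1 ≤ x → deriv φ x ≤ β / x * φ x := by
    intro x hx
    exact (div_le_iff₀ (hpos x hx)).mp (hder x hx).2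
  have hcont : ContinuousOn φ (Set.Ici 1) := fun x hx =>
    ((hdiff x hx).differentiableAt.continuousAt).continuousWithinAt
  have hmono : MonotoneOn φ (Set.Ici 1) := by
    apply monotoneOn_of_deriv_nonneg (convex_Ici 1) hcont
    · intro x hx
      rw [interior_Ici] at hx
      exact (hdiff x (le_of_lt hx)).differentiableAt.differentiableWithinAt
    · intro x hx
      rw [interior_Ici] at hx
      have hx1 : (1:ℝ) ≤ x := le_of_lt hx
      have h0 : (0:ℝ) < γ / x * φ x :=
        mul_pos (div_pos hγ (lt_of_lt_of_le one_pos hx1)) (hpos x hx1)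
      linarith [hd_lb x hx1]
  refine ⟨1/β, 1/γ, by positivity, by positivity, fun r hr => ?_⟩
  set R := 1 + Real.log r with hRdef
  have hlr : 0 ≤ Real.log r := Real.log_nonneg hr
  have hR1 : (1:ℝ) ≤ R := by simp [hRdef]; linarith
  -- change of variables
  have hsub : ∀ s ∈ Set.uIcc (1:ℝ) r, (1:ℝ) ≤ 1 + Real.log s := by
    intro s hs
    rw [Set.uIcc_of_le hr] at hs
    have := Real.log_nonneg hs.1
    linarith
  have himg : (fun s => 1 + Real.log s) '' Set.uIcc (1:ℝ) r ⊆ Set.Ici (1:ℝ) := by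
    rintro _ ⟨s, hs, rfl⟩
    exact hsub s hs
  have hcov : (∫ s in (1:ℝ)..r, (1 + Real.log s)⁻¹ * φ (1 + Real.log s) / s)
      = ∫ u in (1:ℝ)..R, u⁻¹ * φ u := by
    have h1 : ∀ x ∈ Set.uIcc (1:ℝ) r, HasDerivAt (fun s => 1 + Real.log s) x⁻¹ x := by
      intro x hx
      rw [Set.uIcc_of_le hr] at hx
      have hx0 : x ≠ 0 := by linarith [hx.1]
      simpa using (Real.hasDerivAt_log hx0).const_add 1
    have h2 : ContinuousOn (fun x : ℝ => x⁻¹) (Set.uIcc (1:ℝ) r) := by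
      apply ContinuousOn.inv₀ continuousOn_id
      intro x hx
      rw [Set.uIcc_of_le hr] at hx
      simp only [id_eq]
      intro h; rw [h] at hx; linarith [hx.1]
    have h3 : ContinuousOn (fun u : ℝ => u⁻¹ * φ u)
        ((fun s => 1 + Real.log s) '' Set.uIcc (1:ℝ) r) := by
      apply ContinuousOn.mono _ himg
      apply ContinuousOn.mul _ hcont
      apply ContinuousOn.inv₀ continuousOn_id
      intro x hx
      simp only [id_eq]
      intro h; rw [h] at hx; exact absurd hx (by norm_num)
    have := intervalIntegral.integral_comp_smul_deriv' h1 h2 h3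
    simp only [smul_eq_mul, Function.comp, Real.log_one, add_zero] at this
    rw [← this]
    congr 1
    ext s
    ring
  rw [hcov]
  -- integrability of deriv φ on [1, R]
  have hder_meas := (measurable_deriv φ)
  have hφR : ∀ x ∈ Set.Icc (1:ℝ) R, φ x ≤ φ R := fun x hx =>
    hmono hx.1 (Set.mem_Ici.mpr hR1) hx.2
  have hInt_d : IntervalIntegrable (deriv φ) volume 1 R := by
    rw [intervalIntegrable_iff_integrableOn_Icc_of_le hR1]
    apply Measure.integrableOn_of_bounded (M := β * φ R) (measure_Icc_lt_top).ne
      hder_meas.aestronglyMeasurable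
    filter_upwards [ae_restrict_mem measurableSet_Icc] with x hx
    have hx1 : (1:ℝ) ≤ x := hx.1
    rw [Real.norm_eq_abs, abs_le]
    constructor
    · have h1 := hd_lb x hx1
      have h0 : (0:ℝ) < γ / x * φ x :=
        mul_pos (div_pos hγ (lt_of_lt_of_le one_pos hx1)) (hpos x hx1)
      nlinarith [hpos R hR1, hβ, hpos x hx1, hφR x hx]
    · have h2 := hd_ub x hx1
      have hx0 : (0:ℝ) < x := by linarith
      have : β / x * φ x ≤ β * φ R := by
        have h3 : β / x ≤ β := by
          rw [div_le_iff₀ hx0]; nlinarith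
        have := hφR x hx
        nlinarith [hpos x hx1]
      linarith
  have hInt_g : IntervalIntegrable (fun u : ℝ => u⁻¹ * φ u) volume 1 R := by
    apply ContinuousOn.intervalIntegrable
    rw [Set.uIcc_of_le hR1]
    apply ContinuousOn.mul
    · apply ContinuousOn.inv₀ continuousOn_id
      intro x hx
      simp only [id_eq]
      intro h; rw [h] at hx; linarith [hx.1]
    · exact hcont.mono (fun x hx => hx.1)
  -- FTC
  have hftc : (∫ u in (1:ℝ)..R, deriv φ u) = φ R - 1 := by
    have h := intervalIntegral.integral_eq_sub_of_hasDerivAt (f := φ) (f' := deriv φ)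
      (a := 1) (b := R) (fun x hx => by
        rw [Set.uIcc_of_le hR1] at hx
        exact hdiff x hx.1) hInt_d
    rw [h, hφ1]
  -- pointwise comparisons
  have hlow : (1/β) * (φ R - 1) ≤ ∫ u in (1:ℝ)..R, u⁻¹ * φ u := by
    have : (∫ u in (1:ℝ)..R, (1/β) * deriv φ u) ≤ ∫ u in (1:ℝ)..R, u⁻¹ * φ u := by
      apply intervalIntegral.integral_mono_on hR1 (hInt_d.const_mul _) hInt_g
      intro x hx
      have hx1 : (1:ℝ) ≤ x := hx.1
      have hx0 : (0:ℝ) < x := by linarith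
      have h2 := hd_ub x hx1
      have h3 := mul_le_mul_of_nonneg_left h2 (by positivity : (0:ℝ) ≤ 1/β)
      have h4 : (1/β) * (β / x * φ x) = x⁻¹ * φ x := by field_simp
      linarith
    rwa [intervalIntegral.integral_const_mul, hftc] at this
  have hhigh : (∫ u in (1:ℝ)..R, u⁻¹ * φ u) ≤ (1/γ) * (φ R - 1) := by
    have : (∫ u in (1:ℝ)..R, u⁻¹ * φ u) ≤ ∫ u in (1:ℝ)..R, (1/γ) * deriv φ u := by
      apply intervalIntegral.integral_mono_on hR1 hInt_g (hInt_d.const_mul _)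
      intro x hx
      have hx1 : (1:ℝ) ≤ x := hx.1
      have hx0 : (0:ℝ) < x := by linarith
      have h1 := hd_lb x hx1
      have h3 := mul_le_mul_of_nonneg_left h1 (by positivity : (0:ℝ) ≤ 1/γ)
      have h4 : (1/γ) * (γ / x * φ x) = x⁻¹ * φ x := by field_simp
      linarith
    rwa [intervalIntegral.integral_const_mul, hftc] at this
  exact ⟨hlow, hhigh⟩
end

section
/- Let φ be an admissible function. Then there exist λ > 1 and constants c, C > 0, depending only on φ, such that for every t > 0 and every r ≥ λt: c · (1 + log(r/t))^{−1} φ(1 + log(r/t)) / r ≤ ∫_r^∞ (1 + log(s/t))^{−1} φ(1 + log(s/t)) · ds/s² ≤ C · (1 + log(r/t))^{−1} φ(1 + log(r/t)) / r. -/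
/-!
Write `ψ u = φ u / u` and `u_s = 1 + log (s / t)`, so that `u_s = u_r + log (s / r)`.
Integrating `(log φ)' ≤ β / x` gives `φ b ≤ φ a (b / a) ^ β`, hence for `s ≥ r ≥ t`
`ψ u_s ≤ ψ u_r (1 + log (s / r)) ^ β ≤ (1 + 2β) ^ β ψ u_r (s / r) ^ (1/2)`; the integrand is then
dominated by a multiple of `ψ u_r r ^ (-1/2) s ^ (-3/2)`, whose tail integral is `≍ ψ u_r / r`.
Conversely `φ` is increasing, so on `(r, 2r]` the integrand is at least
`ψ u_r / ((1 + log 2) 4 r²)`.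
-/

open Real MeasureTheory Set

section LogDerivative

variable {φ : ℝ → ℝ} {β : ℝ}

lemma monotoneOn_Ici_of_deriv_pos (h : ∀ x, 1 ≤ x → 0 < deriv φ x) : MonotoneOn φ (Ici 1) := by
  refine (strictMonoOn_of_deriv_pos (convex_Ici 1) (fun x hx => ?_) fun x hx => ?_).monotoneOn
  · exact (differentiableAt_of_deriv_ne_zero (h x hx).ne').continuousAt.continuousWithinAt
  · rw [interior_Ici] at hx
    exact h x hx.le

lemma le_mul_div_rpow_of_logDeriv_le (hpos : ∀ x, 1 ≤ x → 0 < φ x)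
    (hdiff : ∀ x, 1 ≤ x → DifferentiableAt ℝ φ x) (hβ : ∀ x, 1 ≤ x → deriv φ x / φ x ≤ β / x)
    {a b : ℝ} (ha : 1 ≤ a) (hab : a ≤ b) : φ b ≤ φ a * (b / a) ^ β := by
  have hderiv : ∀ x, 1 ≤ x →
      HasDerivAt (fun y => β * log y - log (φ y)) (β * x⁻¹ - deriv φ x / φ x) x := fun x hx =>
    ((hasDerivAt_log (by linarith)).const_mul β).sub ((hdiff x hx).hasDerivAt.log (hpos x hx).ne')
  have hmono : MonotoneOn (fun y => β * log y - log (φ y)) (Ici 1) := by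
    refine monotoneOn_of_deriv_nonneg (convex_Ici 1)
      (fun x hx => (hderiv x hx).continuousAt.continuousWithinAt) (fun x hx => ?_) fun x hx => ?_
    all_goals rw [interior_Ici] at hx
    · exact (hderiv x hx.le).differentiableAt.differentiableWithinAt
    · rw [(hderiv x hx.le).deriv]
      exact sub_nonneg.2 (div_eq_mul_inv β x ▸ hβ x hx.le)
  have hb : 1 ≤ b := ha.trans hab
  have hratio : 0 < b / a := by positivity
  rw [← log_le_log_iff (hpos b hb) (by have := hpos a ha; positivity),
    log_mul (hpos a ha).ne' (rpow_pos_of_pos hratio β).ne', log_rpow hratio,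
    log_div (by positivity) (by positivity)]
  linarith [hmono (mem_Ici.2 ha) (mem_Ici.2 hb) hab]

lemma inv_mul_le_inv_mul_mul_rpow_of_logDeriv_le (hpos : ∀ x, 1 ≤ x → 0 < φ x)
    (hdiff : ∀ x, 1 ≤ x → DifferentiableAt ℝ φ x) (hβ : ∀ x, 1 ≤ x → deriv φ x / φ x ≤ β / x)
    {a b : ℝ} (ha : 1 ≤ a) (hab : a ≤ b) : b⁻¹ * φ b ≤ a⁻¹ * φ a * (b / a) ^ β :=
  calc b⁻¹ * φ b ≤ a⁻¹ * (φ a * (b / a) ^ β) :=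
        mul_le_mul (inv_anti₀ (by linarith) hab)
          (le_mul_div_rpow_of_logDeriv_le hpos hdiff hβ ha hab) (hpos b (ha.trans hab)).le
          (by positivity)
    _ = a⁻¹ * φ a * (b / a) ^ β := by ring

lemma inv_mul_mul_div_le_inv_mul (hmono : MonotoneOn φ (Ici 1)) {a b : ℝ} (ha : 1 ≤ a)
    (hab : a ≤ b) : a⁻¹ * φ a * (a / b) ≤ b⁻¹ * φ b :=
  calc a⁻¹ * φ a * (a / b) = b⁻¹ * φ a := by field_simp
    _ ≤ b⁻¹ * φ b := mul_le_mul_of_nonneg_left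
        (hmono (mem_Ici.2 ha) (mem_Ici.2 (ha.trans hab)) hab) (inv_nonneg.2 (by linarith))

end LogDerivative

lemma one_add_log_rpow_le_mul_sqrt {y β : ℝ} (hβ : 0 < β) (hy : 1 ≤ y) :
    (1 + log y) ^ β ≤ (1 + 2 * β) ^ β * y ^ (1 / 2 : ℝ) := by
  set ε := (2 * β)⁻¹
  have hε : 0 < ε := by positivity
  have hyε : 1 ≤ y ^ ε := one_le_rpow hy hε.le
  have hlog : log y ≤ y ^ ε * (2 * β) := by
    simpa [ε, div_eq_mul_inv] using log_le_rpow_div (by linarith) hε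
  calc (1 + log y) ^ β ≤ ((1 + 2 * β) * y ^ ε) ^ β :=
        rpow_le_rpow (by linarith [log_nonneg hy]) (by nlinarith) hβ.le
    _ = (1 + 2 * β) ^ β * y ^ (1 / 2 : ℝ) := by
      rw [mul_rpow (by positivity) (by positivity), ← rpow_mul (by linarith)]
      congr 2
      simp only [ε]
      field_simp

lemma integral_Ioi_le_of_le_mul_sqrt_div_sq {f : ℝ → ℝ} {r A : ℝ} (hr : 0 < r)
    (hf : AEStronglyMeasurable f (volume.restrict (Ioi r))) (hf0 : ∀ s ∈ Ioi r, 0 ≤ f s)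
    (hfA : ∀ s ∈ Ioi r, f s ≤ A * (s / r) ^ (1 / 2 : ℝ) / s ^ 2) :
    IntegrableOn f (Ioi r) ∧ ∫ s in Ioi r, f s ≤ 2 * A / r := by
  have hbound : ∀ s ∈ Ioi r,
      A * (s / r) ^ (1 / 2 : ℝ) / s ^ 2 = A * r ^ (-(1 / 2) : ℝ) * s ^ (-(3 / 2) : ℝ) := by
    intro s hs
    have hs0 : 0 < s := hr.trans hs
    rw [div_rpow hs0.le hr.le, rpow_neg hr.le, show (-(3 / 2) : ℝ) = 1 / 2 - 2 by norm_num,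
      rpow_sub hs0, rpow_two]
    field_simp
  have hg : IntegrableOn (fun s => A * r ^ (-(1 / 2) : ℝ) * s ^ (-(3 / 2) : ℝ)) (Ioi r) :=
    (integrableOn_Ioi_rpow_of_lt (by norm_num) hr).const_mul _
  have hfi : IntegrableOn f (Ioi r) :=
    hg.mono' hf <| (ae_restrict_iff' measurableSet_Ioi).2 <| .of_forall fun s hs => by
      rw [norm_of_nonneg (hf0 s hs), ← hbound s hs]
      exact hfA s hs
  have hsq : r ^ (-(1 / 2) : ℝ) * r ^ (-(1 / 2) : ℝ) = r⁻¹ := by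
    rw [← rpow_add hr]
    norm_num [rpow_neg_one]
  refine ⟨hfi, ?_⟩
  calc ∫ s in Ioi r, f s ≤ ∫ s in Ioi r, A * r ^ (-(1 / 2) : ℝ) * s ^ (-(3 / 2) : ℝ) :=
        setIntegral_mono_on hfi hg measurableSet_Ioi fun s hs => (hfA s hs).trans_eq (hbound s hs)
    _ = 2 * A / r := by
      rw [integral_const_mul, integral_Ioi_rpow_of_lt (by norm_num) hr,
        show (-(3 / 2) : ℝ) + 1 = -(1 / 2) by norm_num, div_eq_mul_inv _ r, ← hsq]
      ring

lemma mul_le_integral_Ioi_of_le_on_Ioc {f : ℝ → ℝ} {r b m : ℝ} (hrb : r ≤ b)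
    (hf : IntegrableOn f (Ioi r)) (hf0 : ∀ s ∈ Ioi r, 0 ≤ f s) (hm : ∀ s ∈ Ioc r b, m ≤ f s) :
    (b - r) * m ≤ ∫ s in Ioi r, f s :=
  calc (b - r) * m = ∫ _ in Ioc r b, m := by simp [hrb]
    _ ≤ ∫ s in Ioc r b, f s :=
      setIntegral_mono_on (integrableOn_const measure_Ioc_lt_top.ne)
        (hf.mono_set Ioc_subset_Ioi_self) measurableSet_Ioc hm
    _ ≤ ∫ s in Ioi r, f s :=
      setIntegral_mono_set hf ((ae_restrict_iff' measurableSet_Ioi).2 (.of_forall hf0))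
        Ioc_subset_Ioi_self.eventuallyLE

lemma log_div_add_log_div {t r s : ℝ} (ht : t ≠ 0) (hr : r ≠ 0) (hs : s ≠ 0) :
    log (r / t) + log (s / r) = log (s / t) := by
  rw [← log_mul (div_ne_zero hr ht) (div_ne_zero hs hr)]
  congr 1
  field_simp

lemma one_le_one_add_log_div {t s : ℝ} (ht : 0 < t) (hts : t ≤ s) : 1 ≤ 1 + log (s / t) :=
  le_add_of_nonneg_right (log_nonneg ((one_le_div ht).2 hts))

section TailIntegral

variable {ψ : ℝ → ℝ} {β t r s : ℝ}

lemma apply_one_add_log_div_le_mul_sqrt (hβ : 0 < β) (hψ0 : ∀ u, 1 ≤ u → 0 ≤ ψ u)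
    (hgrow : ∀ a b, 1 ≤ a → a ≤ b → ψ b ≤ ψ a * (b / a) ^ β)
    (ht : 0 < t) (htr : t ≤ r) (hrs : r ≤ s) :
    ψ (1 + log (s / t)) ≤ (1 + 2 * β) ^ β * ψ (1 + log (r / t)) * (s / r) ^ (1 / 2 : ℝ) := by
  have hr : 0 < r := ht.trans_le htr
  set a := 1 + log (r / t)
  have ha : 1 ≤ a := one_le_one_add_log_div ht htr
  have hx : 0 ≤ log (s / r) := log_nonneg ((one_le_div hr).2 hrs)
  have hsplit : 1 + log (s / t) = a + log (s / r) := by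
    rw [← log_div_add_log_div ht.ne' hr.ne' (hr.trans_le hrs).ne']
    ring
  have hratio : (a + log (s / r)) / a ≤ 1 + log (s / r) := by
    rw [div_le_iff₀ (by linarith)]
    nlinarith
  calc ψ (1 + log (s / t)) ≤ ψ a * ((a + log (s / r)) / a) ^ β :=
        hsplit ▸ hgrow a _ ha (by linarith)
    _ ≤ ψ a * (1 + log (s / r)) ^ β := by
        gcongr
        exact hψ0 a ha
    _ ≤ ψ a * ((1 + 2 * β) ^ β * (s / r) ^ (1 / 2 : ℝ)) := by
        gcongr
        · exact hψ0 a ha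
        · exact one_add_log_rpow_le_mul_sqrt hβ ((one_le_div hr).2 hrs)
    _ = (1 + 2 * β) ^ β * ψ a * (s / r) ^ (1 / 2 : ℝ) := by ring

lemma div_one_add_log_two_le_apply_one_add_log_div (hψ0 : ∀ u, 1 ≤ u → 0 ≤ ψ u)
    (hdecay : ∀ a b, 1 ≤ a → a ≤ b → ψ a * (a / b) ≤ ψ b)
    (ht : 0 < t) (htr : t ≤ r) (hrs : r ≤ s) (hs : s ≤ 2 * r) :
    ψ (1 + log (r / t)) / (1 + log 2) ≤ ψ (1 + log (s / t)) := by
  have hr : 0 < r := ht.trans_le htr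
  set a := 1 + log (r / t)
  have ha : 1 ≤ a := one_le_one_add_log_div ht htr
  have hx : 0 ≤ log (s / r) := log_nonneg ((one_le_div hr).2 hrs)
  have hx2 : log (s / r) ≤ log 2 :=
    log_le_log (div_pos (hr.trans_le hrs) hr) ((div_le_iff₀ hr).2 (by linarith))
  have hsplit : 1 + log (s / t) = a + log (s / r) := by
    rw [← log_div_add_log_div ht.ne' hr.ne' (hr.trans_le hrs).ne']
    ring
  calc ψ a / (1 + log 2) ≤ ψ a * (a / (a + log (s / r))) := by
        rw [div_eq_mul_inv]
        gcongr
        · exact hψ0 a ha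
        · rw [le_div_iff₀ (by linarith), inv_mul_eq_div, div_le_iff₀ (by positivity)]
          nlinarith [log_nonneg one_le_two]
    _ ≤ ψ (1 + log (s / t)) := hsplit ▸ hdecay a _ ha (by linarith)

lemma continuousOn_tail_integrand (hψ : ContinuousOn ψ (Ici 1)) (ht : 0 < t) (htr : t ≤ r) :
    ContinuousOn (fun s => ψ (1 + log (s / t)) / s ^ 2) (Ioi r) := by
  have hpos : ∀ s ∈ Ioi r, 0 < s := fun s hs => (ht.trans_le htr).trans hs
  refine ContinuousOn.div (hψ.comp ?_ fun s hs => ?_) (continuousOn_pow 2) fun s hs => ?_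
  · exact continuousOn_const.add <|
      (continuousOn_id.div_const t).log fun s hs => (div_pos (hpos s hs) ht).ne'
  · exact one_le_one_add_log_div ht (htr.trans (le_of_lt hs))
  · exact pow_ne_zero 2 (hpos s hs).ne'

theorem tail_integral_bounds (hβ : 0 < β) (hψ : ContinuousOn ψ (Ici 1))
    (hψ0 : ∀ u, 1 ≤ u → 0 ≤ ψ u)
    (hgrow : ∀ a b, 1 ≤ a → a ≤ b → ψ b ≤ ψ a * (b / a) ^ β)
    (hdecay : ∀ a b, 1 ≤ a → a ≤ b → ψ a * (a / b) ≤ ψ b) (ht : 0 < t) (htr : t ≤ r) :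
    (4 * (1 + log 2))⁻¹ * (ψ (1 + log (r / t)) / r) ≤
        ∫ s in Ioi r, ψ (1 + log (s / t)) / s ^ 2 ∧
      ∫ s in Ioi r, ψ (1 + log (s / t)) / s ^ 2 ≤
        2 * (1 + 2 * β) ^ β * (ψ (1 + log (r / t)) / r) := by
  have hr : 0 < r := ht.trans_le htr
  have hf0 : ∀ s ∈ Ioi r, 0 ≤ ψ (1 + log (s / t)) / s ^ 2 := fun s hs =>
    div_nonneg (hψ0 _ (one_le_one_add_log_div ht (htr.trans (le_of_lt hs)))) (sq_nonneg s)
  obtain ⟨hfi, hupper⟩ := integral_Ioi_le_of_le_mul_sqrt_div_sq hr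
    ((continuousOn_tail_integrand hψ ht htr).aestronglyMeasurable measurableSet_Ioi) hf0
    fun s hs => div_le_div_of_nonneg_right
      (apply_one_add_log_div_le_mul_sqrt hβ hψ0 hgrow ht htr (le_of_lt hs)) (sq_nonneg s)
  refine ⟨?_, hupper.trans_eq (by ring)⟩
  have hlower := mul_le_integral_Ioi_of_le_on_Ioc (by linarith : r ≤ 2 * r) hfi hf0
    (m := ψ (1 + log (r / t)) / (1 + log 2) / (2 * r) ^ 2) fun s hs =>
      div_le_div₀ (hψ0 _ (one_le_one_add_log_div ht (htr.trans (le_of_lt hs.1))))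
        (div_one_add_log_two_le_apply_one_add_log_div hψ0 hdecay ht htr (le_of_lt hs.1) hs.2)
        (pow_pos (hr.trans hs.1) 2) (pow_le_pow_left₀ (hr.trans hs.1).le hs.2 2)
  refine le_of_eq_of_le ?_ hlower
  have := log_pos one_lt_two
  field_simp
  ring

end TailIntegral

theorem stmt6_general (φ : ℝ → ℝ) (γ β : ℝ) (hγ : 0 < γ) (hβ : 0 < β)
    (hmap : ∀ x : ℝ, 1 ≤ x → 1 ≤ φ x)
    (hder : ∀ x : ℝ, 1 ≤ x → γ / x ≤ deriv φ x / φ x ∧ deriv φ x / φ x ≤ β / x) :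
    ∃ lam c C : ℝ, 1 < lam ∧ 0 < c ∧ 0 < C ∧
      ∀ t r : ℝ, 0 < t → lam * t ≤ r →
        c * ((1 + Real.log (r / t))⁻¹ * φ (1 + Real.log (r / t)) / r) ≤
          (∫ s in Set.Ioi r, (1 + Real.log (s / t))⁻¹ * φ (1 + Real.log (s / t)) / s ^ 2) ∧
        (∫ s in Set.Ioi r, (1 + Real.log (s / t))⁻¹ * φ (1 + Real.log (s / t)) / s ^ 2) ≤
          C * ((1 + Real.log (r / t))⁻¹ * φ (1 + Real.log (r / t)) / r) := by
  have hpos : ∀ x, 1 ≤ x → 0 < φ x := fun x hx => one_pos.trans_le (hmap x hx)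
  have hderiv_pos : ∀ x, 1 ≤ x → 0 < deriv φ x := fun x hx =>
    (div_pos_iff_of_pos_right (hpos x hx)).1 ((div_pos hγ (by linarith)).trans_le (hder x hx).1)
  have hdiff : ∀ x, 1 ≤ x → DifferentiableAt ℝ φ x := fun x hx =>
    differentiableAt_of_deriv_ne_zero (hderiv_pos x hx).ne'
  refine ⟨2, (4 * (1 + log 2))⁻¹, 2 * (1 + 2 * β) ^ β, one_lt_two, by positivity, by positivity,
    fun t r ht hr => tail_integral_bounds (ψ := fun u => u⁻¹ * φ u) hβ ?_ ?_ ?_ ?_ ht (by linarith)⟩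
  · exact (continuousOn_inv₀.mono fun x (hx : 1 ≤ x) => (one_pos.trans_le hx).ne').mul
      fun x hx => (hdiff x hx).continuousAt.continuousWithinAt
  · exact fun u hu => mul_nonneg (inv_nonneg.2 (by linarith)) (hpos u hu).le
  · exact fun a b =>
      inv_mul_le_inv_mul_mul_rpow_of_logDeriv_le hpos hdiff fun x hx => (hder x hx).2
  · exact fun a b => inv_mul_mul_div_le_inv_mul (monotoneOn_Ici_of_deriv_pos hderiv_pos)

theorem stmt6 (φ : ℝ → ℝ) (γ β : ℝ) (hγ : 0 < γ) (hβ : 0 < β)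
    (hmap : ∀ x : ℝ, 1 ≤ x → 1 ≤ φ x)
    (hφ1 : φ 1 = 1)
    (hconc : ConcaveOn ℝ (Set.Ici (1 : ℝ)) (fun x => Real.log (φ x)))
    (hder : ∀ x : ℝ, 1 ≤ x → γ / x ≤ deriv φ x / φ x ∧ deriv φ x / φ x ≤ β / x) :
    ∃ lam c C : ℝ, 1 < lam ∧ 0 < c ∧ 0 < C ∧
      ∀ t r : ℝ, 0 < t → lam * t ≤ r →
        c * ((1 + Real.log (r / t))⁻¹ * φ (1 + Real.log (r / t)) / r) ≤
          (∫ s in Set.Ioi r, (1 + Real.log (s / t))⁻¹ * φ (1 + Real.log (s / t)) / s ^ 2) ∧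
        (∫ s in Set.Ioi r, (1 + Real.log (s / t))⁻¹ * φ (1 + Real.log (s / t)) / s ^ 2) ≤
          C * ((1 + Real.log (r / t))⁻¹ * φ (1 + Real.log (r / t)) / r) :=
  stmt6_general φ γ β hγ hβ hmap hder
end

section
/- Let φ be an admissible function with upper log-derivative constant β. Then for every a ≥ 1 and x ≥ 1, φ(x)·e^{−x/a} ≤ max{1, β^β e^{−β}} · φ(a). -/
open Real

theorem stmt17 (φ : ℝ → ℝ) (γ β : ℝ) (hγ : 0 < γ) (hβ : 0 < β)
    (hmap : ∀ x : ℝ, 1 ≤ x → 1 ≤ φ x)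
    (hφ1 : φ 1 = 1)
    (hconc : ConcaveOn ℝ (Set.Ici (1 : ℝ)) (fun x => Real.log (φ x)))
    (hder : ∀ x : ℝ, 1 ≤ x → γ / x ≤ deriv φ x / φ x ∧ deriv φ x / φ x ≤ β / x) :
    ∀ a x : ℝ, 1 ≤ a → 1 ≤ x →
      φ x * Real.exp (-x / a) ≤ max 1 (β ^ β * Real.exp (-β)) * φ a := by
  intro a x ha hx
  have hφpos : ∀ y : ℝ, 1 ≤ y → 0 < φ y := fun y hy => lt_of_lt_of_le one_pos (hmap y hy)
  have hdiff : ∀ y : ℝ, 1 ≤ y → DifferentiableAt ℝ φ y := by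
    intro y hy
    by_contra h
    have h0 : deriv φ y = 0 := deriv_zero_of_not_differentiableAt h
    have h1 := (hder y hy).1
    rw [h0, zero_div] at h1
    have h2 : (0:ℝ) < γ / y := div_pos hγ (lt_of_lt_of_le one_pos hy)
    linarith
  -- derivative of g y = β * log y - log (φ y)
  have hg : ∀ y : ℝ, 1 ≤ y →
      HasDerivAt (fun y => β * Real.log y - Real.log (φ y)) (β * y⁻¹ - deriv φ y / φ y) y := by
    intro y hy
    have hy0 : (0:ℝ) < y := lt_of_lt_of_le one_pos hy
    have h1 : HasDerivAt (fun y => β * Real.log y) (β * y⁻¹) y :=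
      (Real.hasDerivAt_log (ne_of_gt hy0)).const_mul β
    have h2 : HasDerivAt (fun y => Real.log (φ y)) (deriv φ y / φ y) y :=
      ((hdiff y hy).hasDerivAt).log (ne_of_gt (hφpos y hy))
    exact h1.sub h2
  have hmono : MonotoneOn φ (Set.Ici (1:ℝ)) := by
    apply monotoneOn_of_deriv_nonneg (convex_Ici 1)
    · exact fun y hy => ((hdiff y hy).continuousAt).continuousWithinAt
    · intro y hy
      rw [interior_Ici] at hy
      exact (hdiff y (le_of_lt hy)).differentiableWithinAt
    · intro y hy
      rw [interior_Ici] at hy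
      have h1 : (1:ℝ) ≤ y := le_of_lt hy
      have h2 := (hder y h1).1
      have h3 : (0:ℝ) < γ / y := div_pos hγ (lt_of_lt_of_le one_pos h1)
      have h4 : (0:ℝ) ≤ deriv φ y / φ y := le_trans h3.le h2
      have := (le_div_iff₀ (hφpos y h1)).mp h4
      linarith
  have hgmono : MonotoneOn (fun y => β * Real.log y - Real.log (φ y)) (Set.Ici (1:ℝ)) := by
    apply monotoneOn_of_deriv_nonneg (convex_Ici 1)
    · exact fun y hy => ((hg y hy).continuousAt).continuousWithinAt
    · intro y hy
      rw [interior_Ici] at hy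
      exact ((hg y (le_of_lt hy)).differentiableAt).differentiableWithinAt
    · intro y hy
      rw [interior_Ici] at hy
      have h1 : (1:ℝ) ≤ y := le_of_lt hy
      rw [(hg y h1).deriv]
      have h2 := (hder y h1).2
      have h3 : β / y = β * y⁻¹ := div_eq_mul_inv β y
      linarith
  have hmaxβ : β ^ β * Real.exp (-β) ≤ max 1 (β ^ β * Real.exp (-β)) := le_max_right _ _
  have hφa : (0:ℝ) < φ a := hφpos a ha
  rcases le_total x a with hxa | hax
  · -- x ≤ a : φ x ≤ φ a and exp(-x/a) ≤ 1
    have h1 : φ x ≤ φ a := hmono hx (le_trans hx hxa) hxa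
    have h2 : Real.exp (-x / a) ≤ 1 := by
      apply Real.exp_le_one_iff.mpr
      have : (0:ℝ) < a := lt_of_lt_of_le one_pos ha
      have : (0:ℝ) ≤ x / a := div_nonneg (by linarith) (by linarith)
      rw [neg_div]
      linarith
    calc φ x * Real.exp (-x / a) ≤ φ a * 1 :=
          mul_le_mul h1 h2 (Real.exp_pos _).le hφa.le
      _ = φ a := mul_one _
      _ ≤ max 1 (β ^ β * Real.exp (-β)) * φ a :=
          le_mul_of_one_le_left hφa.le (le_max_left _ _)
  · -- a ≤ x
    have ha0 : (0:ℝ) < a := lt_of_lt_of_le one_pos ha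
    have hx0 : (0:ℝ) < x := lt_of_lt_of_le one_pos hx
    set t := x / a with ht
    have ht1 : (1:ℝ) ≤ t := (one_le_div ha0).mpr hax
    have ht0 : (0:ℝ) < t := lt_of_lt_of_le one_pos ht1
    -- from g monotone: log φ x ≤ log φ a + β * log t
    have hgle := hgmono ha (le_trans ha hax) hax
    simp only at hgle
    have hlog : Real.log (φ x) ≤ Real.log (φ a) + β * Real.log t := by
      have : Real.log t = Real.log x - Real.log a := Real.log_div (ne_of_gt hx0) (ne_of_gt ha0)
      rw [this]; linarith
    have hkey : φ x ≤ φ a * t ^ β := by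
      have h1 : φ x = Real.exp (Real.log (φ x)) := (Real.exp_log (hφpos x hx)).symm
      have h2 : φ a * t ^ β = Real.exp (Real.log (φ a) + β * Real.log t) := by
        rw [Real.exp_add, Real.exp_log hφa, Real.rpow_def_of_pos ht0, mul_comm β]
      rw [h1, h2]
      exact Real.exp_le_exp.mpr hlog
    -- t^β * exp(-t) ≤ β^β * exp(-β)
    have hbound : t ^ β * Real.exp (-t) ≤ β ^ β * Real.exp (-β) := by
      have h1 : Real.log (t / β) ≤ t / β - 1 := Real.log_le_sub_one_of_pos (div_pos ht0 hβ)
      have h2 : Real.log (t / β) = Real.log t - Real.log β :=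
        Real.log_div (ne_of_gt ht0) (ne_of_gt hβ)
      have h3 : β * Real.log t - t ≤ β * Real.log β - β := by
        have := mul_le_mul_of_nonneg_left h1 hβ.le
        rw [h2] at this
        have hfld : β * (t / β - 1) = t - β := by field_simp
        nlinarith
      have h4 : t ^ β * Real.exp (-t) = Real.exp (β * Real.log t - t) := by
        rw [Real.rpow_def_of_pos ht0, ← Real.exp_add, mul_comm β]; ring_nf
      have h5 : β ^ β * Real.exp (-β) = Real.exp (β * Real.log β - β) := by
        rw [Real.rpow_def_of_pos hβ, ← Real.exp_add, mul_comm β]; ring_nf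
      rw [h4, h5]
      exact Real.exp_le_exp.mpr h3
    have hnd : -x / a = -t := by rw [neg_div]
    calc φ x * Real.exp (-x / a) ≤ φ a * t ^ β * Real.exp (-t) := by
          rw [hnd]
          exact mul_le_mul_of_nonneg_right hkey (Real.exp_pos _).le
      _ = φ a * (t ^ β * Real.exp (-t)) := by ring
      _ ≤ φ a * (β ^ β * Real.exp (-β)) := mul_le_mul_of_nonneg_left hbound hφa.le
      _ ≤ φ a * max 1 (β ^ β * Real.exp (-β)) := mul_le_mul_of_nonneg_left hmaxβ hφa.le
      _ = max 1 (β ^ β * Real.exp (-β)) * φ a := mul_comm _ _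
end

section
/- Let φ be an admissible function with lower log-derivative constant γ > 0, and for 1 < q < ∞ define g(r) = −φ(1 + log(r/t))·r^{1/q − 1} for a fixed t > 0. Then there exists λ > 1 depending only on φ and q such that for all r ≥ λt, g'(r) ≥ c·φ(1 + log(r/t))·r^{1/q − 2} for some constant c > 0 depending only on φ and q. -/
open Real

/-
Write `x = 1 + log (r / t)`. The chain rule gives
`g'(r) = ((1 - 1/q) φ(x) - φ'(x)) r^{1/q - 2}`, and the upper bound `φ'(x) ≤ β φ(x) / x` makes
`φ'(x)` at most half of `(1 - 1/q) φ(x)` once `x ≥ 2β / (1 - 1/q)`, i.e. once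
`r ≥ exp (2β / (1 - 1/q)) t`. The chain rule needs `φ` differentiable at `x`: the lower bound
`φ'/φ ≥ γ/x > 0` gives `deriv φ x ≠ 0`, and `deriv` is `0` at non-differentiable points.
-/

lemma hasDerivAt_neg_comp_one_add_log_div_mul_rpow {f : ℝ → ℝ} {t r p : ℝ} (ht : 0 < t)
    (hr : 0 < r) (hf : DifferentiableAt ℝ f (1 + log (r / t))) :
    HasDerivAt (fun u => -(f (1 + log (u / t)) * u ^ p))
      ((-p * f (1 + log (r / t)) - deriv f (1 + log (r / t))) * r ^ (p - 1)) r := by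
  have hinner : HasDerivAt (fun u => 1 + log (u / t)) (1 / r) r := by
    have h := (((hasDerivAt_id r).div_const t).log (div_pos hr ht).ne').const_add 1
    rwa [id, div_div_div_cancel_right₀ ht.ne'] at h
  refine (((hf.hasDerivAt.comp r hinner).mul
    (hasDerivAt_rpow_const (Or.inl hr.ne'))).neg).congr_deriv ?_
  rw [show r ^ p = r ^ (p - 1) * r by rw [← rpow_add_one hr.ne', sub_add_cancel]]
  simp only [Function.comp_apply]
  field_simp
  ring

lemma differentiableAt_of_div_le_deriv_div {f : ℝ → ℝ} {γ x : ℝ} (hγ : 0 < γ) (hx : 0 < x)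
    (h : γ / x ≤ deriv f x / f x) : DifferentiableAt ℝ f x := by
  refine differentiableAt_of_deriv_ne_zero fun h0 => ?_
  rw [h0, zero_div] at h
  exact (div_pos hγ hx).not_ge h

lemma le_log_div_of_exp_mul_le {a t r : ℝ} (ht : 0 < t) (hr : exp a * t ≤ r) :
    a ≤ log (r / t) := by
  have hr0 : 0 < r := (mul_pos (exp_pos a) ht).trans_le hr
  rw [le_log_iff_exp_le (div_pos hr0 ht), le_div_iff₀ ht]
  exact hr

theorem stmt19_general (φ : ℝ → ℝ) (γ β : ℝ) (hγ : 0 < γ) (hβ : 0 < β)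
    (hmap : ∀ x : ℝ, 1 ≤ x → 1 ≤ φ x)
    (hder : ∀ x : ℝ, 1 ≤ x → γ / x ≤ deriv φ x / φ x ∧ deriv φ x / φ x ≤ β / x)
    (q : ℝ) (hq : 1 < q) :
    ∃ lam c : ℝ, 1 < lam ∧ 0 < c ∧
      ∀ t : ℝ, 0 < t → ∀ r : ℝ, lam * t ≤ r →
        c * (φ (1 + Real.log (r / t)) * r ^ (1 / q - 2)) ≤
          deriv (fun u => -(φ (1 + Real.log (u / t)) * u ^ (1 / q - 1))) r := by
  set ε := 1 - 1 / q
  have hε : 0 < ε := sub_pos.2 ((div_lt_one (by linarith)).2 hq)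
  refine ⟨exp (2 * β / ε), ε / 2, one_lt_exp_iff.2 (by positivity), by positivity,
    fun t ht r hr => ?_⟩
  have hr0 : 0 < r := (mul_pos (exp_pos _) ht).trans_le hr
  set x := 1 + log (r / t)
  have hx : 1 + 2 * β / ε ≤ x := by linarith [le_log_div_of_exp_mul_le ht hr]
  have hx1 : 1 ≤ x := by linarith [show 0 < 2 * β / ε by positivity]
  have hφ : 0 < φ x := one_pos.trans_le (hmap x hx1)
  obtain ⟨hlower, hupper⟩ := hder x hx1
  have hsmall : deriv φ x ≤ ε / 2 * φ x := by
    have hβx : β / x ≤ ε / 2 := by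
      rw [div_le_iff₀ (by linarith)]
      nlinarith [mul_div_cancel₀ (2 * β) hε.ne']
    calc deriv φ x ≤ β / x * φ x := (div_le_iff₀ hφ).1 hupper
      _ ≤ ε / 2 * φ x := mul_le_mul_of_nonneg_right hβx hφ.le
  rw [(hasDerivAt_neg_comp_one_add_log_div_mul_rpow ht hr0
    (differentiableAt_of_div_le_deriv_div hγ (by linarith) hlower)).deriv,
    show 1 / q - 1 - 1 = 1 / q - 2 by ring, show -(1 / q - 1) = ε by ring, ← mul_assoc]
  exact mul_le_mul_of_nonneg_right (by linarith) (rpow_pos_of_pos hr0 _).le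

theorem stmt19 (φ : ℝ → ℝ) (γ β : ℝ) (hγ : 0 < γ) (hβ : 0 < β)
    (hmap : ∀ x : ℝ, 1 ≤ x → 1 ≤ φ x)
    (hφ1 : φ 1 = 1)
    (hconc : ConcaveOn ℝ (Set.Ici (1 : ℝ)) (fun x => Real.log (φ x)))
    (hder : ∀ x : ℝ, 1 ≤ x → γ / x ≤ deriv φ x / φ x ∧ deriv φ x / φ x ≤ β / x)
    (q : ℝ) (hq : 1 < q) :
    ∃ lam c : ℝ, 1 < lam ∧ 0 < c ∧
      ∀ t : ℝ, 0 < t → ∀ r : ℝ, lam * t ≤ r →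
        c * (φ (1 + Real.log (r / t)) * r ^ (1 / q - 2)) ≤
          deriv (fun u => -(φ (1 + Real.log (u / t)) * u ^ (1 / q - 1))) r :=
  stmt19_general φ γ β hγ hβ hmap hder q hq
end
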